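/- arXiv:2605.11736 — 2 statements merged into one kernel-verified Lean document; each statement's English description precedes it below -/
import Mathlib

section
/- Let d : Fin t → ℝ with d i ≥ −1 for all i and ∑ i, d i ≤ b for a real constant b ≥ 0. Then ∏ i, (1 + d i) ≤ (1 + b/t)^t. -/
theorem prod_one_add_le (t : ℕ) (ht : 1 ≤ t) (d : Fin t → ℝ)
    (hd : ∀ i, -1 ≤ d i) (b : ℝ) (hb : 0 ≤ b)
    (hsum : ∑ i, d i ≤ b) :
    ∏ i, (1 + d i) ≤ (1 + b / t) ^ t := by
  have ht0 : (0:ℝ) < t := by exact_mod_cast ht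
  have hz : ∀ i ∈ Finset.univ, (0:ℝ) ≤ 1 + d i := fun i _ => by linarith [hd i]
  have key := Real.geom_mean_le_arith_mean_weighted Finset.univ
    (fun _ => 1 / (t:ℝ)) (fun i => 1 + d i)
    (fun i _ => by positivity)
    (by simp [Finset.card_univ]; field_simp) hz
  have h1 : ∑ i : Fin t, (1 / (t:ℝ)) * (1 + d i) ≤ 1 + b / t := by
    rw [← Finset.mul_sum, Finset.sum_add_distrib, Finset.sum_const, Finset.card_univ,
      Fintype.card_fin]
    simp only [nsmul_eq_mul, mul_one]
    rw [one_div, inv_mul_eq_div, div_le_iff₀ ht0, add_mul, div_mul_cancel₀ _ (ne_of_gt ht0), one_mul]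
    linarith
  have h2 : (∏ i : Fin t, (1 + d i) ^ (1 / (t:ℝ))) ≤ 1 + b / t := le_trans key h1
  have hprodnn : (0:ℝ) ≤ ∏ i : Fin t, (1 + d i) := Finset.prod_nonneg hz
  have h3 : ∏ i : Fin t, (1 + d i) ^ (1 / (t:ℝ)) = (∏ i : Fin t, (1 + d i)) ^ (1 / (t:ℝ)) := by
    rw [← Real.finset_prod_rpow _ _ hz]
  calc ∏ i : Fin t, (1 + d i)
      = ((∏ i : Fin t, (1 + d i)) ^ (1 / (t:ℝ))) ^ (t:ℕ) := by
        rw [← Real.rpow_natCast (_ ^ (1/(t:ℝ))) t, ← Real.rpow_mul hprodnn]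
        rw [one_div_mul_cancel (ne_of_gt ht0), Real.rpow_one]
    _ ≤ (1 + b / t) ^ t := by
        apply pow_le_pow_left₀ (Real.rpow_nonneg hprodnn _)
        rw [← h3]; exact h2
end

section
/- Fix integers k ≥ ℓ ≥ 2 and a distribution q over candidates {x, y₁,…,y_ℓ} satisfying: (k+ℓ)·q(x) + ∑_{i=2}^{ℓ} q(yᵢ) ≥ (k+ℓ)²/(2k+ℓ+1) and (k+1)·q(y₁) + k·∑_{i=2}^{ℓ} q(yᵢ) ≥ (k+1)²/(2k+ℓ+1). Then q(x) ≥ (k+ℓ)/(2k+ℓ+1). -/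
theorem afs_lower_bound_qx (k ℓ : ℕ) (hℓ : 2 ≤ ℓ) (hkℓ : ℓ ≤ k)
    (qx : ℝ) (qy : Fin ℓ → ℝ)
    (hqx : 0 ≤ qx) (hqy : ∀ i, 0 ≤ qy i)
    (hsum : qx + ∑ i, qy i = 1)
    (h1 : ((k : ℝ) + ℓ) * qx + ∑ i ∈ Finset.univ.erase (Fin.mk 0 (by omega)), qy i ≥
      ((k : ℝ) + ℓ) ^ 2 / (2 * k + ℓ + 1))
    (h2 : ((k : ℝ) + 1) * qy (Fin.mk 0 (by omega)) + k * ∑ i ∈ Finset.univ.erase (Fin.mk 0 (by omega)), qy i ≥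
      ((k : ℝ) + 1) ^ 2 / (2 * k + ℓ + 1)) :
    qx ≥ ((k : ℝ) + ℓ) / (2 * k + ℓ + 1) := by
  have hsplit : qy (Fin.mk 0 (by omega)) +
      ∑ i ∈ Finset.univ.erase (Fin.mk 0 (by omega)), qy i = ∑ i, qy i :=
    Finset.add_sum_erase _ _ (Finset.mem_univ _)
  have hl : (2:ℝ) ≤ (ℓ:ℝ) := by exact_mod_cast hℓ
  have hkl : (ℓ:ℝ) ≤ (k:ℝ) := by exact_mod_cast hkℓ
  have hD : (0:ℝ) < 2 * k + ℓ + 1 := by positivity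
  rw [ge_iff_le, div_le_iff₀ hD]
  rw [ge_iff_le, div_le_iff₀ hD] at h1 h2
  nlinarith [h1, h2, hsplit, hsum, hl, hkl, mul_pos hD hD]
end
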